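/- Let f : ℝ^{p×q} → ℝ be differentiable, λ > 0, and define g(U,V) = f(UVᵀ) + (λ/2)(‖U‖_F² + ‖V‖_F²). If (U,V) is a critical point of g (∇g(U,V) = 0), then UᵀU = VᵀV. -/

import Mathlib

open Matrix

noncomputable def singularValues {m n : Type*} [Fintype m] [Fintype n] [DecidableEq n]
    (X : Matrix m n ℝ) : n → ℝ :=
  fun i => Real.sqrt ((Matrix.isHermitian_conjTranspose_mul_self X).eigenvalues i)

noncomputable def nuclearNorm {m n : Type*} [Fintype m] [Fintype n] [DecidableEq n]
    (X : Matrix m n ℝ) : ℝ := ∑ i, singularValues X i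

noncomputable def frobNorm {m n : Type*} [Fintype m] [Fintype n] (X : Matrix m n ℝ) : ℝ :=
  Real.sqrt ((Xᵀ * X).trace)

noncomputable def spectralNorm₂ {m n : Type*} [Fintype m] [Fintype n] [DecidableEq m] [DecidableEq n]
    (X : Matrix m n ℝ) : ℝ :=
  ‖LinearMap.toContinuousLinearMap (Matrix.toEuclideanLin X)‖

noncomputable def smallestNonzeroSV {m n : Type*} [Fintype m] [Fintype n] [DecidableEq n]
    (X : Matrix m n ℝ) : ℝ :=
  sInf {s | (∃ i, singularValues X i = s) ∧ s ≠ 0}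

noncomputable def distO {n r : ℕ} (W₁ W₂ : Matrix (Fin n) (Fin r) ℝ) : ℝ :=
  sInf {d | ∃ R : Matrix (Fin r) (Fin r) ℝ, Rᵀ * R = 1 ∧ d = frobNorm (W₁ - W₂ * R)}

attribute [local instance] Matrix.normedAddCommGroup Matrix.normedSpace

/-! Along the direction `(U M, -V M)` with `M` symmetric, the product `U Vᵀ` is stationary to first
order, so at a critical point the derivative of the regulariser in that direction,
`λ tr((UᵀU - VᵀV) M)`, vanishes. Taking `M = UᵀU - VᵀV` gives `λ ‖UᵀU - VᵀV‖_F² = 0`. -/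

section
variable {m n k : Type*} [Fintype m] [Fintype n] [Fintype k]

theorem frobNorm_sq (X : Matrix m n ℝ) : frobNorm X ^ 2 = (Xᵀ * X).trace :=
  Real.sq_sqrt <| by simpa using (posSemidef_conjTranspose_mul_self X).trace_nonneg

theorem hasFDerivAt_mul_transpose (p : Matrix m k ℝ × Matrix n k ℝ) :
    ∃ D : Matrix m k ℝ × Matrix n k ℝ →L[ℝ] Matrix m n ℝ,
      HasFDerivAt (fun W : Matrix m k ℝ × Matrix n k ℝ => W.1 * W.2ᵀ) D p ∧
      ∀ H K, D (H, K) = H * p.2ᵀ + p.1 * Kᵀ := by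
  let transposeL : Matrix n k ℝ →L[ℝ] Matrix k n ℝ :=
    (transposeLinearEquiv n k ℝ ℝ).toLinearMap.toContinuousLinearMap
  exact ⟨_, (mulLinearMap ℝ).toContinuousBilinearMap.hasFDerivAt_of_bilinear
    (hasFDerivAt_fst (p := p)) (transposeL.hasFDerivAt.comp p hasFDerivAt_snd),
    fun _ _ => add_comm _ _⟩

theorem hasFDerivAt_frobNorm_sq (X : Matrix m n ℝ) :
    ∃ D : Matrix m n ℝ →L[ℝ] ℝ, HasFDerivAt (fun Y : Matrix m n ℝ => frobNorm Y ^ 2) D X ∧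
      ∀ H, D H = 2 * (Xᵀ * H).trace := by
  let transposeL : Matrix m n ℝ →L[ℝ] Matrix n m ℝ :=
    (transposeLinearEquiv m n ℝ ℝ).toLinearMap.toContinuousLinearMap
  let traceL : Matrix n n ℝ →L[ℝ] ℝ := (traceLinearMap n ℝ ℝ).toContinuousLinearMap
  have htrace := traceL.hasFDerivAt.comp X ((mulLinearMap ℝ).toContinuousBilinearMap.hasFDerivAt_of_bilinear
    transposeL.hasFDerivAt (hasFDerivAt_id X))
  simp only [funext frobNorm_sq]
  refine ⟨_, htrace, fun H => ?_⟩
  change (Xᵀ * H + Hᵀ * X).trace = _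
  rw [trace_add, ← trace_transpose (Hᵀ * X), transpose_mul, transpose_transpose, two_mul]

theorem hasFDerivAt_factored_objective {f : Matrix m n ℝ → ℝ} {U : Matrix m k ℝ}
    {V : Matrix n k ℝ} (hf : DifferentiableAt ℝ f (U * Vᵀ)) (l : ℝ) :
    ∃ D : Matrix m k ℝ × Matrix n k ℝ →L[ℝ] ℝ,
      HasFDerivAt (fun W : Matrix m k ℝ × Matrix n k ℝ =>
        f (W.1 * W.2ᵀ) + l / 2 * (frobNorm W.1 ^ 2 + frobNorm W.2 ^ 2)) D (U, V) ∧
      ∀ H K, D (H, K) = fderiv ℝ f (U * Vᵀ) (H * Vᵀ + U * Kᵀ) +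
        l * ((Uᵀ * H).trace + (Vᵀ * K).trace) := by
  obtain ⟨Dμ, hμ, hμ_apply⟩ := hasFDerivAt_mul_transpose (U, V)
  obtain ⟨DU, hU, hU_apply⟩ := hasFDerivAt_frobNorm_sq U
  obtain ⟨DV, hV, hV_apply⟩ := hasFDerivAt_frobNorm_sq V
  have hreg : HasFDerivAt (fun W : Matrix m k ℝ × Matrix n k ℝ => frobNorm W.1 ^ 2 + frobNorm W.2 ^ 2)
      (DU.comp (.fst ℝ _ _) + DV.comp (.snd ℝ _ _)) (U, V) :=
    (hU.comp (U, V) (hasFDerivAt_fst (𝕜 := ℝ) (p := (U, V)))).add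
      (hV.comp (U, V) (hasFDerivAt_snd (𝕜 := ℝ) (p := (U, V))))
  refine ⟨_, (hf.hasFDerivAt.comp (U, V) hμ).add (hreg.const_mul (l / 2)), fun H K => ?_⟩
  change fderiv ℝ f (U * Vᵀ) (Dμ (H, K)) + l / 2 * (DU H + DV K) = _
  rw [hμ_apply, hU_apply, hV_apply]
  ring

end

theorem stmt6 {p q r : ℕ} (f : Matrix (Fin p) (Fin q) ℝ → ℝ)
    (hf : Differentiable ℝ f) (l : ℝ) (hl : 0 < l)
    (U : Matrix (Fin p) (Fin r) ℝ) (V : Matrix (Fin q) (Fin r) ℝ)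
    (hcrit : fderiv ℝ (fun W : Matrix (Fin p) (Fin r) ℝ × Matrix (Fin q) (Fin r) ℝ =>
        f (W.1 * W.2ᵀ) + l / 2 * (frobNorm W.1 ^ 2 + frobNorm W.2 ^ 2)) (U, V) = 0) :
    Uᵀ * U = Vᵀ * V := by
  obtain ⟨D, hD, hD_apply⟩ := hasFDerivAt_factored_objective (hf (U * Vᵀ)) l
  set M := Uᵀ * U - Vᵀ * V with hM
  have hM_symm : Mᵀ = M := by simp [hM, transpose_sub]
  have hprod_stationary : U * M * Vᵀ + U * (-(V * M))ᵀ = 0 := by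
    simp [transpose_neg, transpose_mul, hM_symm, Matrix.mul_assoc]
  have h := hD_apply (U * M) (-(V * M))
  rw [← hD.fderiv, hcrit, _root_.zero_apply, hprod_stationary, map_zero, zero_add, Matrix.mul_neg,
    trace_neg, ← sub_eq_add_neg, ← Matrix.mul_assoc, ← Matrix.mul_assoc, ← trace_sub,
    ← Matrix.sub_mul, ← hM] at h
  have htr : (Mᴴ * M).trace = 0 := by
    rw [conjTranspose_eq_transpose_of_trivial, hM_symm]
    exact (mul_eq_zero.mp h.symm).resolve_left hl.ne'
  exact sub_eq_zero.mp (trace_conjTranspose_mul_self_eq_zero_iff.mp htr)
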